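/- arXiv:2601.06476 — 2 statements merged into one kernel-verified Lean document; each statement's English description precedes it below -/
import Mathlib

section
/- Let l₁, l₂, l₃, m₁, m₂, m₃ be linear forms in ℂ[X₀,X₁,X₂,X₃] such that l₁, l₂, l₃, m₁ are linearly independent, and set f = l₁l₂l₃ − m₁m₂m₃. Then there exists a ℂ-algebra automorphism φ of ℂ[X₀,X₁,X₂,X₃] (given by an invertible linear change of variables) and linear forms h₁, h₂ such that φ(f) = X₀X₁X₂ − X₃·h₁·h₂; consequently the leading monomial of φ(f) with respect to the degree reverse lexicographic order with X₀ > X₁ > X₂ > X₃ is X₀X₁X₂. -/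
open MvPolynomial

/-- The degree reverse lexicographic order on exponent vectors in `n` variables,
where `ord j` is the variable in position `j` (position `0` = greatest variable).
`u` is smaller than `v` iff `u` has smaller total degree, or the degrees agree and the
last nonzero entry of the vector of differences `u - v` (entries listed according to the
variable order) is positive. -/
def DegRevLexLT {n : ℕ} (ord : Fin n → Fin n) (u v : Fin n →₀ ℕ) : Prop :=
  (∑ i, u i) < (∑ i, v i) ∨
    ((∑ i, u i) = (∑ i, v i) ∧
      ∃ j : Fin n, v (ord j) < u (ord j) ∧ ∀ k : Fin n, j < k → u (ord k) = v (ord k))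

/-- `d` is the leading monomial of `f` with respect to the strict order `lt` on
exponent vectors: `d` occurs in `f` and dominates every other exponent in the support. -/
def IsLeadingMonomial {n : ℕ} {R : Type*} [CommSemiring R]
    (lt : (Fin n →₀ ℕ) → (Fin n →₀ ℕ) → Prop) (f : MvPolynomial (Fin n) R)
    (d : Fin n →₀ ℕ) : Prop :=
  d ∈ f.support ∧ ∀ e ∈ f.support, e ≠ d → lt e d

/-!
Four linearly independent linear forms in four variables form a basis of the space of linear
forms, so the linear change of variables sending `l₁, l₂, l₃, m₁` to `X₀, X₁, X₂, X₃` turns `f`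
into `X₀X₁X₂ - X₃h₁h₂`. Every monomial of `X₃h₁h₂` contains `X₃` and `X₀X₁X₂` does not; since
`φ f` is homogeneous and `X₃` is the last variable, degrevlex ranks `X₀X₁X₂` above all of them.
-/

namespace MvPolynomial

section LinearSubst

variable {σ R : Type*} [CommRing R]

noncomputable def basisHomogeneousSubmoduleOne : Module.Basis σ R (homogeneousSubmodule σ R 1) :=
  (Module.Basis.span (linearIndependent_X σ R)).map
    (LinearEquiv.ofEq _ _ homogeneousSubmodule_one_eq_span_X.symm)

@[simp]
theorem basisHomogeneousSubmoduleOne_apply (i : σ) :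
    basisHomogeneousSubmoduleOne (R := R) i = ⟨X i, isHomogeneous_X R i⟩ := by
  ext
  simp [basisHomogeneousSubmoduleOne, Module.Basis.span_apply]

noncomputable def linearSubst (T : homogeneousSubmodule σ R 1 →ₗ[R] homogeneousSubmodule σ R 1) :
    MvPolynomial σ R →ₐ[R] MvPolynomial σ R :=
  aeval fun i => (T ⟨X i, isHomogeneous_X R i⟩ : MvPolynomial σ R)

@[simp]
theorem linearSubst_X (T : homogeneousSubmodule σ R 1 →ₗ[R] homogeneousSubmodule σ R 1) (i : σ) :
    linearSubst T (X i) = T ⟨X i, isHomogeneous_X R i⟩ :=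
  aeval_X _ i

theorem linearSubst_apply_of_mem
    (T : homogeneousSubmodule σ R 1 →ₗ[R] homogeneousSubmodule σ R 1)
    (p : homogeneousSubmodule σ R 1) : linearSubst T p = T p := by
  have : (linearSubst T).toLinearMap ∘ₗ (homogeneousSubmodule σ R 1).subtype =
      (homogeneousSubmodule σ R 1).subtype ∘ₗ T :=
    basisHomogeneousSubmoduleOne.ext fun i => by simp
  exact LinearMap.congr_fun this p

noncomputable def linearSubstEquiv
    (e : homogeneousSubmodule σ R 1 ≃ₗ[R] homogeneousSubmodule σ R 1) :
    MvPolynomial σ R ≃ₐ[R] MvPolynomial σ R :=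
  AlgEquiv.ofAlgHom (linearSubst e) (linearSubst e.symm)
    (algHom_ext fun i => by simp [linearSubst_apply_of_mem])
    (algHom_ext fun i => by simp [linearSubst_apply_of_mem])

theorem linearSubstEquiv_apply_of_mem
    (e : homogeneousSubmodule σ R 1 ≃ₗ[R] homogeneousSubmodule σ R 1)
    (p : homogeneousSubmodule σ R 1) : linearSubstEquiv e p = e p :=
  linearSubst_apply_of_mem e.toLinearMap p

theorem IsHomogeneous.linearSubstEquiv
    (e : homogeneousSubmodule σ R 1 ≃ₗ[R] homogeneousSubmodule σ R 1)
    {p : MvPolynomial σ R} (hp : p.IsHomogeneous 1) :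
    (linearSubstEquiv e p).IsHomogeneous 1 := by
  rw [← mem_homogeneousSubmodule, linearSubstEquiv_apply_of_mem e ⟨p, hp⟩]
  exact (e ⟨p, hp⟩).2

theorem exists_linearEquiv_homogeneousSubmodule_one_apply_eq_X
    {K : Type*} [Field K] [Fintype σ] {L : σ → MvPolynomial σ K}
    (hL : ∀ i, (L i).IsHomogeneous 1) (hind : LinearIndependent K L) :
    ∃ e : homogeneousSubmodule σ K 1 ≃ₗ[K] homogeneousSubmodule σ K 1,
      ∀ i, e ⟨L i, hL i⟩ = ⟨X i, isHomogeneous_X K i⟩ := by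
  have : Module.Finite K (homogeneousSubmodule σ K 1) := .of_basis basisHomogeneousSubmoduleOne
  have hind' : LinearIndependent K fun i => (⟨L i, hL i⟩ : homogeneousSubmodule σ K 1) :=
    .of_comp (homogeneousSubmodule σ K 1).subtype hind
  let b := basisOfLinearIndependentOfCardEqFinrank' _ hind'
    (Module.finrank_eq_card_basis basisHomogeneousSubmoduleOne).symm
  refine ⟨b.equiv basisHomogeneousSubmoduleOne (Equiv.refl σ), fun i => ?_⟩
  simpa [b] using b.equiv_apply i basisHomogeneousSubmoduleOne (Equiv.refl σ)

end LinearSubst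

theorem coeff_X_mul_eq_zero {σ R : Type*} [CommSemiring R] {i : σ} {e : σ →₀ ℕ}
    (he : e i = 0) (p : MvPolynomial σ R) : coeff e (X i * p) = 0 := by
  classical
  rw [coeff_X_mul', if_neg (by simpa using he)]

end MvPolynomial

theorem isLeadingMonomial_degRevLex_of_last_eq_zero {n k : ℕ} {R : Type*} [CommSemiring R]
    {F : MvPolynomial (Fin (n + 1)) R} (hF : F.IsHomogeneous k) {d : Fin (n + 1) →₀ ℕ}
    (hd : d ∈ F.support) (hd_last : d (Fin.last n) = 0)
    (hlast : ∀ e ∈ F.support, e ≠ d → e (Fin.last n) ≠ 0) :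
    IsLeadingMonomial (DegRevLexLT id) F d := by
  refine ⟨hd, fun e he hne => Or.inr ⟨?_, Fin.last n, ?_, fun k hk => ?_⟩⟩
  · simp only [← Finsupp.degree_eq_sum, Finsupp.degree_eq_weight_one]
    exact (hF (mem_support_iff.mp he)).trans (hF (mem_support_iff.mp hd)).symm
  · simpa [hd_last, Nat.pos_iff_ne_zero] using hlast e he hne
  · exact absurd hk (Fin.le_last k).not_gt

theorem isLeadingMonomial_degRevLex_monomial_sub_X_last_mul {n k : ℕ} {R : Type*} [CommRing R]
    {d : Fin (n + 1) →₀ ℕ} (hd_last : d (Fin.last n) = 0) {c : R} (hc : c ≠ 0)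
    (g : MvPolynomial (Fin (n + 1)) R)
    (hF : (monomial d c - X (Fin.last n) * g).IsHomogeneous k) :
    IsLeadingMonomial (DegRevLexLT id) (monomial d c - X (Fin.last n) * g) d := by
  classical
  have hcoeff (e) : coeff e (monomial d c - X (Fin.last n) * g) =
      (if d = e then c else 0) - coeff e (X (Fin.last n) * g) := by
    rw [coeff_sub, coeff_monomial]
  refine isLeadingMonomial_degRevLex_of_last_eq_zero hF ?_ hd_last fun e he hne => ?_
  · simpa [mem_support_iff, hcoeff, coeff_X_mul_eq_zero hd_last] using hc
  · intro he_last
    simp [mem_support_iff, hcoeff, Ne.symm hne, coeff_X_mul_eq_zero he_last] at he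

/-- if `l₁, l₂, l₃, m₁, m₂, m₃` are linear forms in `ℂ[X₀,X₁,X₂,X₃]` with
`l₁, l₂, l₃, m₁` linearly independent and `f = l₁l₂l₃ − m₁m₂m₃`, then there exist a
linear change of variables `φ` and linear forms `h₁, h₂` with
`φ f = X₀X₁X₂ − X₃h₁h₂`; consequently the leading monomial of `φ f` with respect to
degrevlex with `X₀ > X₁ > X₂ > X₃` is `X₀X₁X₂`. -/
theorem statement2 (l₁ l₂ l₃ m₁ m₂ m₃ : MvPolynomial (Fin 4) ℂ)
    (hl₁ : l₁.IsHomogeneous 1) (hl₂ : l₂.IsHomogeneous 1) (hl₃ : l₃.IsHomogeneous 1)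
    (hm₁ : m₁.IsHomogeneous 1) (hm₂ : m₂.IsHomogeneous 1) (hm₃ : m₃.IsHomogeneous 1)
    (hind : LinearIndependent ℂ ![l₁, l₂, l₃, m₁])
    (f : MvPolynomial (Fin 4) ℂ) (hf : f = l₁ * l₂ * l₃ - m₁ * m₂ * m₃) :
    ∃ φ : MvPolynomial (Fin 4) ℂ ≃ₐ[ℂ] MvPolynomial (Fin 4) ℂ,
      (∀ i, (φ (X i)).IsHomogeneous 1) ∧
      ∃ h₁ h₂ : MvPolynomial (Fin 4) ℂ, h₁.IsHomogeneous 1 ∧ h₂.IsHomogeneous 1 ∧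
        φ f = X 0 * X 1 * X 2 - X 3 * h₁ * h₂ ∧
        IsLeadingMonomial (DegRevLexLT (id : Fin 4 → Fin 4)) (φ f)
          (Finsupp.single 0 1 + Finsupp.single 1 1 + Finsupp.single 2 1) := by
  have hL : ∀ i, (![l₁, l₂, l₃, m₁] i).IsHomogeneous 1 := by
    intro i; fin_cases i <;> assumption
  obtain ⟨e, he⟩ := exists_linearEquiv_homogeneousSubmodule_one_apply_eq_X hL hind
  set φ := linearSubstEquiv e
  have hφL (i : Fin 4) : φ (![l₁, l₂, l₃, m₁] i) = X i := by
    rw [linearSubstEquiv_apply_of_mem e ⟨_, hL i⟩, he]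
  obtain ⟨hφl₁, hφl₂, hφl₃, hφm₁⟩ : φ l₁ = X 0 ∧ φ l₂ = X 1 ∧ φ l₃ = X 2 ∧ φ m₁ = X 3 :=
    ⟨hφL 0, hφL 1, hφL 2, hφL 3⟩
  have hφf : φ f = X 0 * X 1 * X 2 - X 3 * φ m₂ * φ m₃ := by
    simp only [hf, map_sub, map_mul, hφl₁, hφl₂, hφl₃, hφm₁]
  have hφm₂ := hm₂.linearSubstEquiv e
  have hφm₃ := hm₃.linearSubstEquiv e
  refine ⟨φ, fun i => (isHomogeneous_X ℂ i).linearSubstEquiv e, φ m₂, φ m₃, hφm₂, hφm₃, hφf, ?_⟩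
  have hX : (X 0 * X 1 * X 2 : MvPolynomial (Fin 4) ℂ) =
      monomial (Finsupp.single 0 1 + Finsupp.single 1 1 + Finsupp.single 2 1) 1 := by
    simp only [X, monomial_mul, mul_one]
  have hhom : (X 0 * X 1 * X 2 - X 3 * (φ m₂ * φ m₃)).IsHomogeneous 3 :=
    (((isHomogeneous_X ℂ 0).mul (isHomogeneous_X ℂ 1)).mul (isHomogeneous_X ℂ 2)).sub
      ((isHomogeneous_X ℂ 3).mul (hφm₂.mul hφm₃))
  rw [hX] at hhom
  rw [hφf, hX, mul_assoc]
  exact isLeadingMonomial_degRevLex_monomial_sub_X_last_mul (by simp) one_ne_zero _ hhom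
end

section
/- Let R = 𝔽₂[[x,y]]/(x,y)² and denote by x̄, ȳ the images of x and y in R. There exists an additive map φ : R → R such that φ(r² s) = r φ(s) for all r, s ∈ R and φ(x̄) = ȳ. In particular, since ȳ does not belong to the ideal (x̄) of R, the ideal (x̄) is not uniformly compatible. -/
/-!
Write `𝔪` for the ideal of power series without constant term, so `(x, y) = 𝔪` and
`R = 𝔽₂[[x,y]]/𝔪²`. The map `φ(f) = coeff_x(f) · ȳ` kills `𝔪²`. Since `𝔪 · ȳ = 0` in `R`, the
product `r φ(s)` only sees the constant term `r(0)`; on the other side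
`coeff_x(r² s) = r(0)² coeff_x(s) + 2 r(0) coeff_x(r) s(0) = r(0) coeff_x(s)` over `𝔽₂`.
Finally `φ(x̄) = ȳ`, and `ȳ ∉ (x̄)` because every element of `(x) + 𝔪²` has vanishing
`y`-coefficient.
-/

/-- An ideal `J` of a ring `R` of prime characteristic `p` is uniformly compatible if
`φ(J) ⊆ J` for every `e ≥ 1` and every additive map `φ : R → R` satisfying
`φ (r^(p^e) * s) = r * φ s` (the `p^(−e)`-linear maps on `R`). -/
def UniformlyCompatible (p : ℕ) {R : Type*} [CommRing R] (J : Ideal R) : Prop :=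
  ∀ e : ℕ, 1 ≤ e → ∀ φ : R →+ R,
    (∀ r s : R, φ (r ^ p ^ e * s) = r * φ s) → ∀ j ∈ J, φ j ∈ J

theorem not_uniformlyCompatible_of_map_notMem {p e : ℕ} {R : Type*} [CommRing R] {J : Ideal R}
    (he : 1 ≤ e) (φ : R →+ R) (hφ : ∀ r s : R, φ (r ^ p ^ e * s) = r * φ s) {j : R}
    (hj : j ∈ J) (hφj : φ j ∉ J) : ¬ UniformlyCompatible p J :=
  fun h ↦ hφj (h e he φ hφ j hj)

open Ideal
open Ideal.Quotient (mk mk_surjective)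

namespace MvPowerSeries

variable {σ k : Type*}

section CommSemiring

variable [CommSemiring k]

theorem coeff_single_one_mul (i : σ) (f g : MvPowerSeries σ k) :
    coeff (Finsupp.single i 1) (f * g) =
      constantCoeff f * coeff (Finsupp.single i 1) g +
        coeff (Finsupp.single i 1) f * constantCoeff g := by
  classical
  rw [coeff_mul, Finsupp.antidiagonal_single, Finset.sum_map]
  simp [Finset.Nat.antidiagonal_succ, coeff_zero_eq_constantCoeff]

theorem coeff_single_one_eq_zero_of_mem_ker_sq (i : σ) {f : MvPowerSeries σ k}
    (hf : f ∈ RingHom.ker (constantCoeff (σ := σ) (R := k)) ^ 2) :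
    coeff (Finsupp.single i 1) f = 0 := by
  rw [pow_two] at hf
  refine Submodule.mul_induction_on hf (fun g hg h hh ↦ ?_) fun _ _ hg hh ↦ ?_
  · rw [RingHom.mem_ker] at hg hh
    simp [coeff_single_one_mul, hg, hh]
  · rw [map_add, hg, hh, add_zero]

theorem ker_constantCoeff_eq_span_X_fin_two :
    RingHom.ker (constantCoeff (σ := Fin 2) (R := k)) = span {X 0, X 1} := by
  refine le_antisymm (fun f hf ↦ ?_) (span_le.mpr ?_)
  · rw [RingHom.mem_ker] at hf
    let g : MvPowerSeries (Fin 2) k := fun d ↦ if d 1 = 0 then coeff d f else 0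
    let h : MvPowerSeries (Fin 2) k := fun d ↦ if d 1 = 0 then 0 else coeff d f
    have hfgh : f = g + h := by
      ext d
      change coeff d f = (if d 1 = 0 then coeff d f else 0) + (if d 1 = 0 then 0 else coeff d f)
      split_ifs <;> simp
    have hg : X 0 ∣ g := by
      refine X_dvd_iff.mpr fun d hd0 ↦ ?_
      change (if d 1 = 0 then coeff d f else 0) = 0
      split_ifs with hd1
      · have hd : d = 0 := by ext i; fin_cases i <;> assumption
        rwa [hd, coeff_zero_eq_constantCoeff]
      · rfl
    have hh : X 1 ∣ h := X_dvd_iff.mpr fun d hd1 ↦ if_pos hd1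
    rw [hfgh]
    exact add_mem (mem_of_dvd _ hg (subset_span (by simp)))
      (mem_of_dvd _ hh (subset_span (by simp)))
  · rintro _ (rfl | rfl) <;> simp

end CommSemiring

section Quotient

variable [CommRing k]

local notation "𝔪" => RingHom.ker (constantCoeff (σ := σ) (R := k))

theorem mk_mul_mk_X (f : MvPowerSeries σ k) (j : σ) :
    mk (𝔪 ^ 2) f * mk (𝔪 ^ 2) (X j) =
      mk (𝔪 ^ 2) (C (constantCoeff f)) * mk (𝔪 ^ 2) (X j) := by
  rw [← map_mul, ← map_mul, Ideal.Quotient.eq, ← sub_mul, pow_two]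
  exact mul_mem_mul (by simp [RingHom.mem_ker]) (by simp [RingHom.mem_ker])

noncomputable def linearCoeffMap (i j : σ) :
    MvPowerSeries σ k ⧸ 𝔪 ^ 2 →+ MvPowerSeries σ k ⧸ 𝔪 ^ 2 :=
  QuotientAddGroup.lift (𝔪 ^ 2).toAddSubgroup
    (AddMonoidHom.mk' (fun f ↦ mk (𝔪 ^ 2) (C (coeff (Finsupp.single i 1) f) * X j))
      fun f g ↦ by simp only [map_add, add_mul])
    fun f hf ↦ by simp [coeff_single_one_eq_zero_of_mem_ker_sq i hf]

theorem linearCoeffMap_mk (i j : σ) (f : MvPowerSeries σ k) :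
    linearCoeffMap i j (mk (𝔪 ^ 2) f) = mk (𝔪 ^ 2) (C (coeff (Finsupp.single i 1) f) * X j) :=
  rfl

theorem linearCoeffMap_mk_X (i j : σ) :
    linearCoeffMap i j (mk (𝔪 ^ 2) (X i)) = mk (𝔪 ^ 2) (X j) := by
  classical
  simp [linearCoeffMap_mk, coeff_X]

theorem mk_X_notMem_span_mk_X [Nontrivial k] {i j : σ} (hij : i ≠ j) :
    mk (𝔪 ^ 2) (X j) ∉ span {mk (𝔪 ^ 2) (X i)} := by
  classical
  rw [mem_span_singleton']
  rintro ⟨z, hz⟩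
  obtain ⟨f, rfl⟩ := mk_surjective z
  rw [← map_mul, Ideal.Quotient.eq] at hz
  simpa [coeff_single_one_mul, coeff_X, Finsupp.single_left_inj one_ne_zero, hij.symm] using
    coeff_single_one_eq_zero_of_mem_ker_sq j hz

end Quotient

section CharTwo

local notation "𝔪" => RingHom.ker (constantCoeff (σ := σ) (R := ZMod 2))

theorem coeff_single_one_sq_mul (i : σ) (f g : MvPowerSeries σ (ZMod 2)) :
    coeff (Finsupp.single i 1) (f ^ 2 * g) = constantCoeff f * coeff (Finsupp.single i 1) g := by
  have hlin : coeff (Finsupp.single i 1) (f ^ 2) = 0 := by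
    rw [pow_two, coeff_single_one_mul, mul_comm]
    exact CharTwo.add_self_eq_zero _
  rw [coeff_single_one_mul, hlin, map_pow, ZMod.pow_card, zero_mul, add_zero]

theorem linearCoeffMap_sq_mul (i j : σ) (r s : MvPowerSeries σ (ZMod 2) ⧸ 𝔪 ^ 2) :
    linearCoeffMap i j (r ^ 2 * s) = r * linearCoeffMap i j s := by
  obtain ⟨f, rfl⟩ := mk_surjective r
  obtain ⟨g, rfl⟩ := mk_surjective s
  rw [← map_pow, ← map_mul, linearCoeffMap_mk, linearCoeffMap_mk, coeff_single_one_sq_mul]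
  simp only [map_mul]
  rw [mul_left_comm (mk _ f), mk_mul_mk_X]
  ring

end CharTwo

end MvPowerSeries

open MvPowerSeries

/-- let `R = 𝔽₂[[x,y]]/(x,y)²` and let `x̄, ȳ` be the images of `x, y`.
There is an additive map `φ : R → R` with `φ (r² s) = r φ s` and `φ x̄ = ȳ`; since
`ȳ ∉ (x̄)`, the ideal `(x̄)` is not uniformly compatible. -/
theorem statement15 :
    letI S := MvPowerSeries (Fin 2) (ZMod 2)
    letI R := S ⧸ (Ideal.span {(MvPowerSeries.X 0 : S), MvPowerSeries.X 1}) ^ 2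
    letI xbar : R := Ideal.Quotient.mk _ (MvPowerSeries.X 0)
    letI ybar : R := Ideal.Quotient.mk _ (MvPowerSeries.X 1)
    (∃ φ : R →+ R, (∀ r s : R, φ (r ^ 2 * s) = r * φ s) ∧ φ xbar = ybar) ∧
      ybar ∉ Ideal.span {xbar} ∧
      ¬ UniformlyCompatible 2 (Ideal.span {xbar}) := by
  rw [← ker_constantCoeff_eq_span_X_fin_two]
  have hy := mk_X_notMem_span_mk_X (σ := Fin 2) (k := ZMod 2) zero_ne_one
  refine ⟨⟨linearCoeffMap 0 1, linearCoeffMap_sq_mul 0 1, linearCoeffMap_mk_X 0 1⟩, hy, ?_⟩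
  refine not_uniformlyCompatible_of_map_notMem le_rfl (linearCoeffMap 0 1)
    (by simpa using linearCoeffMap_sq_mul 0 1) (mem_span_singleton_self _) ?_
  rwa [linearCoeffMap_mk_X]
end
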